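/- Suppose S has real entries, Ω₋ and Ω₊ are purely imaginary, and C₋ and C₊ are purely imaginary. (i) If C₋ = C₊, then the first n rows of B vanish, [I_n 0]·A = [Im(Ω₋+Ω₊), 0], and consequently [I_n 0]·Aᵏ·B = 0 for every integer k ≥ 0; that is, the amplitude-quadrature components q of the state are uncontrollable (they evolve autonomously, which together with observability of the pair (Im(Ω₋+Ω₊), output map) makes q a QND variable). (ii) If C₋ = −C₊, then the last n rows of B vanish, [0 I_n]·A = [0, Im(Ω₋−Ω₊)], and consequently [0 I_n]·Aᵏ·B = 0 for every integer k ≥ 0; that is, the phase-quadrature components p are uncontrollable. -/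

import Mathlib

open Matrix

noncomputable section

namespace LQS

/-- Entrywise real part, as a complex matrix. -/
def matRe {k l : ℕ} (X : Matrix (Fin k) (Fin l) ℂ) : Matrix (Fin k) (Fin l) ℂ :=
  fun i j => ((X i j).re : ℂ)

/-- Entrywise imaginary part, as a complex matrix. -/
def matIm {k l : ℕ} (X : Matrix (Fin k) (Fin l) ℂ) : Matrix (Fin k) (Fin l) ℂ :=
  fun i j => ((X i j).im : ℂ)

/-- A complex matrix has real entries. -/
def isReal {k l : ℕ} (X : Matrix (Fin k) (Fin l) ℂ) : Prop := ∀ i j, (X i j).im = 0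

/-- A complex matrix is purely imaginary (every entry has zero real part). -/
def isPurelyImag {k l : ℕ} (X : Matrix (Fin k) (Fin l) ℂ) : Prop := ∀ i j, (X i j).re = 0

/-- The symplectic matrix J_k = [[0, I],[−I, 0]]. -/
def Jmat (k : ℕ) : Matrix (Fin k ⊕ Fin k) (Fin k ⊕ Fin k) ℂ :=
  fromBlocks 0 1 (-1) 0

/-- D = [[Re S, −Im S],[Im S, Re S]]. -/
def quadD {m : ℕ} (S : Matrix (Fin m) (Fin m) ℂ) :
    Matrix (Fin m ⊕ Fin m) (Fin m ⊕ Fin m) ℂ :=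
  fromBlocks (matRe S) (-(matIm S)) (matIm S) (matRe S)

/-- C = [[Re(C₋+C₊), −Im(C₋−C₊)],[Im(C₋+C₊), Re(C₋−C₊)]]. -/
def quadC {m n : ℕ} (Cm Cp : Matrix (Fin m) (Fin n) ℂ) :
    Matrix (Fin m ⊕ Fin m) (Fin n ⊕ Fin n) ℂ :=
  fromBlocks (matRe (Cm + Cp)) (-(matIm (Cm - Cp))) (matIm (Cm + Cp)) (matRe (Cm - Cp))

/-- B = −[[Re((C₋−C₊)†), −Im((C₋−C₊)†)],[Im((C₋+C₊)†), Re((C₋+C₊)†)]]·D. -/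
def quadB {m n : ℕ} (S : Matrix (Fin m) (Fin m) ℂ) (Cm Cp : Matrix (Fin m) (Fin n) ℂ) :
    Matrix (Fin n ⊕ Fin n) (Fin m ⊕ Fin m) ℂ :=
  -(fromBlocks (matRe (Cm - Cp)ᴴ) (-(matIm (Cm - Cp)ᴴ))
      (matIm (Cm + Cp)ᴴ) (matRe (Cm + Cp)ᴴ)) * quadD S

/-- JH = [[Im(Ω₋+Ω₊), Re(Ω₋−Ω₊)],[−Re(Ω₋+Ω₊), Im(Ω₋−Ω₊)]]. -/
def quadJH {n : ℕ} (Om Op : Matrix (Fin n) (Fin n) ℂ) :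
    Matrix (Fin n ⊕ Fin n) (Fin n ⊕ Fin n) ℂ :=
  fromBlocks (matIm (Om + Op)) (matRe (Om - Op)) (-(matRe (Om + Op))) (matIm (Om - Op))

/-- C♯ = −J_n·Cᵀ·J_m. -/
def quadCsharp {m n : ℕ} (Cm Cp : Matrix (Fin m) (Fin n) ℂ) :
    Matrix (Fin n ⊕ Fin n) (Fin m ⊕ Fin m) ℂ :=
  -(Jmat n) * (quadC Cm Cp)ᵀ * (Jmat m)

/-- A = JH − (1/2)·C♯·C. -/
def quadA {m n : ℕ} (Cm Cp : Matrix (Fin m) (Fin n) ℂ) (Om Op : Matrix (Fin n) (Fin n) ℂ) :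
    Matrix (Fin n ⊕ Fin n) (Fin n ⊕ Fin n) ℂ :=
  quadJH Om Op - (1/2 : ℂ) • (quadCsharp Cm Cp * quadC Cm Cp)

/-- Transfer matrix G[s] = D + C(sI − A)⁻¹B. -/
def transferG {m n : ℕ} (S : Matrix (Fin m) (Fin m) ℂ) (Cm Cp : Matrix (Fin m) (Fin n) ℂ)
    (Om Op : Matrix (Fin n) (Fin n) ℂ) (s : ℂ) :
    Matrix (Fin m ⊕ Fin m) (Fin m ⊕ Fin m) ℂ :=
  quadD S + quadC Cm Cp *
    (s • (1 : Matrix (Fin n ⊕ Fin n) (Fin n ⊕ Fin n) ℂ) - quadA Cm Cp Om Op)⁻¹ *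
    quadB S Cm Cp

end LQS

open LQS Matrix

namespace LQSAux

lemma matRe_zero {k l : ℕ} : matRe (0 : Matrix (Fin k) (Fin l) ℂ) = 0 := by
  ext i j; simp [matRe]
lemma matIm_zero {k l : ℕ} : matIm (0 : Matrix (Fin k) (Fin l) ℂ) = 0 := by
  ext i j; simp [matIm]
lemma matRe_eq_zero {k l : ℕ} {X : Matrix (Fin k) (Fin l) ℂ} (h : isPurelyImag X) :
    matRe X = 0 := by ext i j; simp [matRe, h i j]
lemma pi_add {k l : ℕ} {X Y : Matrix (Fin k) (Fin l) ℂ} (hX : isPurelyImag X)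
    (hY : isPurelyImag Y) : isPurelyImag (X + Y) := fun i j => by
  simp [Matrix.add_apply, Complex.add_re, hX i j, hY i j]
lemma pi_sub {k l : ℕ} {X Y : Matrix (Fin k) (Fin l) ℂ} (hX : isPurelyImag X)
    (hY : isPurelyImag Y) : isPurelyImag (X - Y) := fun i j => by
  simp [Matrix.sub_apply, Complex.sub_re, hX i j, hY i j]
lemma pi_neg {k l : ℕ} {X : Matrix (Fin k) (Fin l) ℂ} (hX : isPurelyImag X) :
    isPurelyImag (-X) := fun i j => by simp [Matrix.neg_apply, hX i j]
lemma pi_ct {k l : ℕ} {X : Matrix (Fin k) (Fin l) ℂ} (hX : isPurelyImag X) :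
    isPurelyImag Xᴴ := fun i j => by simp [Matrix.conjTranspose_apply, hX j i]

lemma fc10_mul {n a b c : ℕ} (X : Matrix (Fin n) (Fin a) ℂ) (Y : Matrix (Fin n) (Fin b) ℂ)
    (Z : Matrix (Fin c) (Fin a) ℂ) (W : Matrix (Fin c) (Fin b) ℂ) :
    (fromCols 1 0 : Matrix (Fin n) (Fin n ⊕ Fin c) ℂ) * fromBlocks X Y Z W
      = fromCols X Y := by
  rw [fromCols_mul_fromBlocks]; simp

lemma fc01_mul {n a b c : ℕ} (X : Matrix (Fin c) (Fin a) ℂ) (Y : Matrix (Fin c) (Fin b) ℂ)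
    (Z : Matrix (Fin n) (Fin a) ℂ) (W : Matrix (Fin n) (Fin b) ℂ) :
    (fromCols 0 1 : Matrix (Fin n) (Fin c ⊕ Fin n) ℂ) * fromBlocks X Y Z W
      = fromCols Z W := by
  rw [fromCols_mul_fromBlocks]; simp

end LQSAux

open LQSAux

open LQSAux

/-- With real S, purely imaginary Ω₋, Ω₊, C₋, C₊:
(i) if C₋ = C₊ the q-rows of B vanish, [I 0]·A = [Im(Ω₋+Ω₊), 0] and [I 0]·Aᵏ·B = 0 for all k;
(ii) if C₋ = −C₊ the p-rows of B vanish, [0 I]·A = [0, Im(Ω₋−Ω₊)] and [0 I]·Aᵏ·B = 0 for all k. -/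
theorem stmt_2 {m n : ℕ} (hm : 1 ≤ m) (hn : 1 ≤ n)
    (S : Matrix (Fin m) (Fin m) ℂ) (Cm Cp : Matrix (Fin m) (Fin n) ℂ)
    (Om Op : Matrix (Fin n) (Fin n) ℂ)
    (hS : S ∈ Matrix.unitaryGroup (Fin m) ℂ)
    (hOmH : Omᴴ = Om) (hOpS : Opᵀ = Op)
    (hSre : isReal S) (hCmim : isPurelyImag Cm) (hCpim : isPurelyImag Cp)
    (hOmim : isPurelyImag Om) (hOpim : isPurelyImag Op) :
    (Cm = Cp →
      (fromCols 1 0 : Matrix (Fin n) (Fin n ⊕ Fin n) ℂ) * quadB S Cm Cp = 0 ∧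
      (fromCols 1 0 : Matrix (Fin n) (Fin n ⊕ Fin n) ℂ) * quadA Cm Cp Om Op
        = fromCols (matIm (Om + Op)) 0 ∧
      ∀ k : ℕ, (fromCols 1 0 : Matrix (Fin n) (Fin n ⊕ Fin n) ℂ)
        * (quadA Cm Cp Om Op) ^ k * quadB S Cm Cp = 0) ∧
    (Cm = -Cp →
      (fromCols 0 1 : Matrix (Fin n) (Fin n ⊕ Fin n) ℂ) * quadB S Cm Cp = 0 ∧
      (fromCols 0 1 : Matrix (Fin n) (Fin n ⊕ Fin n) ℂ) * quadA Cm Cp Om Op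
        = fromCols 0 (matIm (Om - Op)) ∧
      ∀ k : ℕ, (fromCols 0 1 : Matrix (Fin n) (Fin n ⊕ Fin n) ℂ)
        * (quadA Cm Cp Om Op) ^ k * quadB S Cm Cp = 0) := by
  constructor
  · intro h
    subst h
    have hB : (fromCols 1 0 : Matrix (Fin n) (Fin n ⊕ Fin n) ℂ) * quadB S Cm Cm = 0 := by
      rw [quadB, sub_self, conjTranspose_zero, matRe_zero, matIm_zero, ← Matrix.mul_assoc,
        fromBlocks_neg, fc10_mul]
      simp
    have hCform : quadC Cm Cm = fromBlocks 0 0 (matIm (Cm + Cm)) 0 := by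
      rw [quadC, sub_self, matIm_zero, matRe_zero, matRe_eq_zero (pi_add hCmim hCmim)]
      simp
    have hCsh : quadCsharp Cm Cm = fromBlocks 0 0 (-(matIm (Cm + Cm))ᵀ) 0 := by
      rw [quadCsharp, hCform, Jmat, Jmat]
      simp [fromBlocks_transpose, fromBlocks_multiply, fromBlocks_neg]
    have hA : (fromCols 1 0 : Matrix (Fin n) (Fin n ⊕ Fin n) ℂ) * quadA Cm Cm Om Op
        = fromCols (matIm (Om + Op)) 0 := by
      rw [quadA, Matrix.mul_sub, Matrix.mul_smul, ← Matrix.mul_assoc, hCsh, fc10_mul, quadJH, fc10_mul,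
        matRe_eq_zero (pi_sub hOmim hOpim)]
      simp
    have hA' : (fromCols 1 0 : Matrix (Fin n) (Fin n ⊕ Fin n) ℂ) * quadA Cm Cm Om Op
        = matIm (Om + Op) * (fromCols 1 0 : Matrix (Fin n) (Fin n ⊕ Fin n) ℂ) := by
      rw [hA, mul_fromCols]; simp
    refine ⟨hB, hA, fun k => ?_⟩
    have key : ∀ k : ℕ, (fromCols 1 0 : Matrix (Fin n) (Fin n ⊕ Fin n) ℂ)
        * (quadA Cm Cm Om Op) ^ k = (matIm (Om + Op)) ^ k * (fromCols 1 0 : Matrix (Fin n) (Fin n ⊕ Fin n) ℂ) := by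
      intro k
      induction k with
      | zero => simp
      | succ k ih =>
        rw [pow_succ, ← Matrix.mul_assoc, ih, Matrix.mul_assoc, hA', pow_succ, ← Matrix.mul_assoc]
    rw [key, Matrix.mul_assoc, hB, Matrix.mul_zero]
  · intro h
    subst h
    have hsum : -Cp + Cp = (0 : Matrix (Fin m) (Fin n) ℂ) := by simp
    have hB : (fromCols 0 1 : Matrix (Fin n) (Fin n ⊕ Fin n) ℂ) * quadB S (-Cp) Cp = 0 := by
      rw [quadB, hsum, conjTranspose_zero, matRe_zero, matIm_zero, ← Matrix.mul_assoc,
        fromBlocks_neg, fc01_mul]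
      simp
    have hCform : quadC (-Cp) Cp = fromBlocks 0 (-(matIm (-Cp - Cp))) 0 0 := by
      rw [quadC, hsum, matIm_zero, matRe_zero, matRe_eq_zero (pi_sub (pi_neg hCpim) hCpim)]
    have hCsh : quadCsharp (-Cp) Cp = fromBlocks 0 (-(-(matIm (-Cp - Cp)))ᵀ) 0 0 := by
      rw [quadCsharp, hCform, Jmat, Jmat]
      simp [fromBlocks_transpose, fromBlocks_multiply, fromBlocks_neg]
    have hA : (fromCols 0 1 : Matrix (Fin n) (Fin n ⊕ Fin n) ℂ) * quadA (-Cp) Cp Om Op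
        = fromCols 0 (matIm (Om - Op)) := by
      rw [quadA, Matrix.mul_sub, Matrix.mul_smul, ← Matrix.mul_assoc, hCsh, fc01_mul, quadJH, fc01_mul,
        matRe_eq_zero (pi_add hOmim hOpim)]
      simp
    have hA' : (fromCols 0 1 : Matrix (Fin n) (Fin n ⊕ Fin n) ℂ) * quadA (-Cp) Cp Om Op
        = matIm (Om - Op) * (fromCols 0 1 : Matrix (Fin n) (Fin n ⊕ Fin n) ℂ) := by
      rw [hA, mul_fromCols]; simp
    refine ⟨hB, hA, fun k => ?_⟩
    have key : ∀ k : ℕ, (fromCols 0 1 : Matrix (Fin n) (Fin n ⊕ Fin n) ℂ)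
        * (quadA (-Cp) Cp Om Op) ^ k = (matIm (Om - Op)) ^ k * (fromCols 0 1 : Matrix (Fin n) (Fin n ⊕ Fin n) ℂ) := by
      intro k
      induction k with
      | zero => simp
      | succ k ih =>
        rw [pow_succ, ← Matrix.mul_assoc, ih, Matrix.mul_assoc, hA', pow_succ, ← Matrix.mul_assoc]
    rw [key, Matrix.mul_assoc, hB, Matrix.mul_zero]
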